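/- arXiv:1303.4373 — 6 statements merged into one kernel-verified Lean document; each statement's English description precedes it below -/
import Mathlib

section
/- Let Σ = {1,...,N}^ℕ be the full shift on N symbols and suppose a probability measure ω on Σ and a function ν assigning to each cylinder I a positive weight with ν(Σ)=1 and ν additive over immediate subcylinders are given. Suppose there are K ∈ ℕ, β < 1 such that for every cylinder I of length n there is K(I) ≤ K with ∑_{J : |J|=K(I)} √(ω(IJ) ν(IJ)) ≤ β √(ω(I) ν(I)). Then for every n > K, ∑_{I : |I| = n} √(ω(I) ν(I)) ≤ β̃^n for some β̃ with β < β̃ < 1 depending only on β, K, and N. -/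
/-!
Write `s I = √(ω I · ν I)`. Cauchy–Schwarz and the additivity of `ω` and `ν` make `s I`
dominate the sum of `s` over the children of `I`, so the total of `s` over the descendants of `I`
at depth `m` is antitone in `m`. The hypothesis at depth `k(I) ≤ K` therefore holds at depth
exactly `K`, and iterating it along generations gives `∑_{|I| = n} s I ≤ β ^ ⌊n / K⌋`, which for
`n ≥ K` is at most `β' ^ n` with `β' = β ^ (1 / 2K)`.
-/

open Finset

section DescendantSum

variable {α : Type*} [Fintype α]

theorem sum_sqrt_mul_append_singleton_le {ω ν : List α → ℝ}
    (hω : ∀ I, 0 ≤ ω I) (hν : ∀ I, 0 ≤ ν I) (I : List α)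
    (hωadd : ω I = ∑ j, ω (I ++ [j])) (hνadd : ν I = ∑ j, ν (I ++ [j])) :
    ∑ j, √(ω (I ++ [j]) * ν (I ++ [j])) ≤ √(ω I * ν I) :=
  calc ∑ j, √(ω (I ++ [j]) * ν (I ++ [j]))
      = ∑ j, √(ω (I ++ [j])) * √(ν (I ++ [j])) := by
        simp only [Real.sqrt_mul (hω _)]
    _ ≤ √(∑ j, ω (I ++ [j])) * √(∑ j, ν (I ++ [j])) :=
        Real.sum_sqrt_mul_sqrt_le _ (fun _ => hω _) (fun _ => hν _)
    _ = √(ω I * ν I) := by rw [← hωadd, ← hνadd, Real.sqrt_mul (hω I)]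

def descendantSum (s : List α → ℝ) (m : ℕ) (I : List α) : ℝ :=
  ∑ J : Fin m → α, s (I ++ List.ofFn J)

@[simp]
theorem descendantSum_zero (s : List α → ℝ) (I : List α) : descendantSum s 0 I = s I := by
  simp [descendantSum]

theorem descendantSum_succ (s : List α → ℝ) (m : ℕ) (I : List α) :
    descendantSum s (m + 1) I = ∑ j, descendantSum s m (I ++ [j]) := by
  rw [descendantSum, ← (Fin.consEquiv fun _ => α).sum_comp, Fintype.sum_prod_type]
  simp [descendantSum, List.ofFn_succ]

variable {s : List α → ℝ}

theorem descendantSum_succ_le (hs : ∀ I, ∑ j, s (I ++ [j]) ≤ s I) (m : ℕ) (I : List α) :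
    descendantSum s (m + 1) I ≤ descendantSum s m I := by
  induction m generalizing I with
  | zero => simpa [descendantSum_succ] using hs I
  | succ m ih =>
    rw [descendantSum_succ, descendantSum_succ s m]
    exact sum_le_sum fun j _ => ih _

theorem descendantSum_antitone (hs : ∀ I, ∑ j, s (I ++ [j]) ≤ s I) (I : List α) :
    Antitone (descendantSum s · I) :=
  antitone_nat_of_succ_le fun m => descendantSum_succ_le hs m I

theorem descendantSum_add_le {K : ℕ} {β : ℝ} (hK : ∀ I, descendantSum s K I ≤ β * s I) (n : ℕ) (I : List α) :
    descendantSum s (n + K) I ≤ β * descendantSum s n I := by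
  induction n generalizing I with
  | zero => simpa using hK I
  | succ n ih =>
    rw [Nat.add_right_comm, descendantSum_succ, descendantSum_succ, mul_sum]
    exact sum_le_sum fun j _ => ih _

theorem descendantSum_add_mul_le {K : ℕ} {β : ℝ} (hβ : 0 ≤ β)
    (hK : ∀ I, descendantSum s K I ≤ β * s I) (r q : ℕ) (I : List α) :
    descendantSum s (r + K * q) I ≤ β ^ q * descendantSum s r I := by
  induction q with
  | zero => simp
  | succ q ih =>
    rw [mul_add, mul_one, ← add_assoc]
    calc descendantSum s (r + K * q + K) I
        ≤ β * descendantSum s (r + K * q) I := descendantSum_add_le hK _ I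
      _ ≤ β * (β ^ q * descendantSum s r I) := mul_le_mul_of_nonneg_left ih hβ
      _ = β ^ (q + 1) * descendantSum s r I := by ring

theorem descendantSum_le_pow_div_mul (hs : ∀ I, ∑ j, s (I ++ [j]) ≤ s I) {K : ℕ} {β : ℝ}
    (hβ : 0 ≤ β) (hK : ∀ I, descendantSum s K I ≤ β * s I) (n : ℕ) (I : List α) :
    descendantSum s n I ≤ β ^ (n / K) * s I :=
  calc descendantSum s n I = descendantSum s (n % K + K * (n / K)) I := by
        rw [Nat.mod_add_div]
    _ ≤ β ^ (n / K) * descendantSum s (n % K) I := descendantSum_add_mul_le hβ hK _ _ I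
    _ ≤ β ^ (n / K) * s I := by
        refine mul_le_mul_of_nonneg_left ?_ (pow_nonneg hβ _)
        simpa using descendantSum_antitone hs I (Nat.zero_le (n % K))

end DescendantSum

theorem exists_pow_div_le_pow {β : ℝ} (hβ0 : 0 < β) (hβ1 : β < 1) {K : ℕ} (hK : 1 ≤ K) :
    ∃ β' : ℝ, β < β' ∧ β' < 1 ∧ ∀ n, K ≤ n → β ^ (n / K) ≤ β' ^ n := by
  have h2K : (1 : ℝ) < ((2 * K : ℕ) : ℝ) := by norm_cast; omega
  refine ⟨β ^ ((2 * K : ℕ) : ℝ)⁻¹, ?_, Real.rpow_lt_one hβ0.le hβ1 (by positivity),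
    fun n hn => ?_⟩
  · simpa using Real.rpow_lt_rpow_of_exponent_gt hβ0 hβ1 (inv_lt_one_of_one_lt₀ h2K)
  · have hq : 1 ≤ n / K := (Nat.one_le_div_iff hK).mpr hn
    have hnq : n ≤ 2 * K * (n / K) := by
      have := Nat.lt_div_mul_add (a := n) hK
      nlinarith
    calc β ^ (n / K)
        = ((β ^ ((2 * K : ℕ) : ℝ)⁻¹) ^ (2 * K)) ^ (n / K) := by
          rw [Real.rpow_inv_natCast_pow hβ0.le (by omega)]
      _ = (β ^ ((2 * K : ℕ) : ℝ)⁻¹) ^ (2 * K * (n / K)) := by rw [← pow_mul]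
      _ ≤ (β ^ ((2 * K : ℕ) : ℝ)⁻¹) ^ n :=
          pow_le_pow_of_le_one (by positivity)
            (Real.rpow_le_one hβ0.le hβ1.le (by positivity)) hnq

theorem exponential_decay_of_sqrt_sums_general (N : ℕ)
    (ω ν : List (Fin N) → ℝ)
    (hω1 : ω [] = 1) (hν1 : ν [] = 1)
    (hωnonneg : ∀ I, 0 ≤ ω I) (hνpos : ∀ I, 0 < ν I)
    (hωadd : ∀ I, ω I = ∑ j : Fin N, ω (I ++ [j]))
    (hνadd : ∀ I, ν I = ∑ j : Fin N, ν (I ++ [j]))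
    (K : ℕ) (β : ℝ) (hβ0 : 0 < β) (hβ1 : β < 1)
    (hstep : ∀ I : List (Fin N), ∃ k, 1 ≤ k ∧ k ≤ K ∧
      ∑ J : Fin k → Fin N,
          Real.sqrt (ω (I ++ List.ofFn J) * ν (I ++ List.ofFn J)) ≤
        β * Real.sqrt (ω I * ν I)) :
    ∃ β' : ℝ, β < β' ∧ β' < 1 ∧ ∀ n, K < n →
      ∑ I : Fin n → Fin N,
          Real.sqrt (ω (List.ofFn I) * ν (List.ofFn I)) ≤ β' ^ n := by
  set s : List (Fin N) → ℝ := fun I => √(ω I * ν I)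
  have hchildren : ∀ I, ∑ j, s (I ++ [j]) ≤ s I := fun I =>
    sum_sqrt_mul_append_singleton_le hωnonneg (fun I => (hνpos I).le) I (hωadd I) (hνadd I)
  have hdepthK : ∀ I, descendantSum s K I ≤ β * s I := fun I => by
    obtain ⟨k, -, hkK, hk⟩ := hstep I
    exact (descendantSum_antitone hchildren I hkK).trans hk
  obtain ⟨k, hk1, hkK, -⟩ := hstep []
  obtain ⟨β', hββ', hβ'1, hpow⟩ := exists_pow_div_le_pow hβ0 hβ1 (hk1.trans hkK)
  refine ⟨β', hββ', hβ'1, fun n hn => ?_⟩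
  calc ∑ I : Fin n → Fin N, s (List.ofFn I)
      = descendantSum s n [] := rfl
    _ ≤ β ^ (n / K) * s [] := descendantSum_le_pow_div_mul hchildren hβ0.le hdepthK n []
    _ ≤ β' ^ n := by simpa [s, hω1, hν1] using hpow n hn.le

theorem exponential_decay_of_sqrt_sums (N : ℕ) (hN : 2 ≤ N)
    (ω ν : List (Fin N) → ℝ)
    (hω1 : ω [] = 1) (hν1 : ν [] = 1)
    (hωnonneg : ∀ I, 0 ≤ ω I) (hνpos : ∀ I, 0 < ν I)
    (hωadd : ∀ I, ω I = ∑ j : Fin N, ω (I ++ [j]))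
    (hνadd : ∀ I, ν I = ∑ j : Fin N, ν (I ++ [j]))
    (K : ℕ) (β : ℝ) (hβ0 : 0 < β) (hβ1 : β < 1)
    (hstep : ∀ I : List (Fin N), ∃ k, 1 ≤ k ∧ k ≤ K ∧
      ∑ J : Fin k → Fin N,
          Real.sqrt (ω (I ++ List.ofFn J) * ν (I ++ List.ofFn J)) ≤
        β * Real.sqrt (ω I * ν I)) :
    ∃ β' : ℝ, β < β' ∧ β' < 1 ∧ ∀ n, K < n →
      ∑ I : Fin n → Fin N,
          Real.sqrt (ω (List.ofFn I) * ν (List.ofFn I)) ≤ β' ^ n :=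
  exponential_decay_of_sqrt_sums_general N ω ν hω1 hν1 hωnonneg hνpos hωadd hνadd K β hβ0 hβ1 hstep
end

section
/- In the symbolic optimization for Hausdorff measure of a self-affine-type Cantor set: if a covering R of X by cylinders of generation ≤ n minimizes ∑_{I ∈ R} (diam I)^h among all such coverings and has minimal cardinality, and all ratios diam(IJ)/diam(I) depend only on the word J (not on I), then R consists of all cylinders of a single generation. -/
/-!
The ratio condition makes `φ = D ^ h` a product weight, so `μ(W) = φ W / Φ |W|`, where `Φ m` is
the total weight of generation `m`, is additive over the children of `W`; any covering `R`
therefore has `∑_{W ∈ R} μ W ≥ μ [] = 1`. Writing `φ W = Φ |W| · μ W`, the sum `∑_R φ` is a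
`μ`-average of the levels `Φ |W|`, each of which it does not exceed by optimality, so all
of them equal `∑_R φ`. Hence the generation of the shortest word `W₀ ∈ R` is an optimal covering
too, and minimality of `#R` gives `#R ≤ N ^ |W₀|`. The same averaging with `φ = 1`
(Kraft's inequality) then forces every word of `R` to have length `|W₀|`.
-/

open scoped BigOperators

/-- A finite family of cylinders (words over `Fin N`) of generation `≤ n`
covering the full shift: every infinite sequence has a prefix in the family. -/
def IsCylinderCover (N n : ℕ) (R : Finset (List (Fin N))) : Prop :=
  (∀ I ∈ R, I.length ≤ n) ∧
    ∀ x : ℕ → Fin N, ∃ I ∈ R, I = List.ofFn (fun k : Fin I.length => x k)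

open Finset

def wordsOfLength (α : Type*) [Fintype α] [DecidableEq α] (m : ℕ) : Finset (List α) :=
  (univ : Finset (Fin m → α)).image List.ofFn

section Words

variable {α : Type*}

def RatioDependsOnLength (φ : List α → ℝ) : Prop :=
  ∀ I I' J : List α, I.length = I'.length → φ (I ++ J) * φ I' = φ (I' ++ J) * φ I

lemma RatioDependsOnLength.rpow {φ : List α → ℝ} (hφ : RatioDependsOnLength φ)
    (hφ0 : ∀ W, 0 ≤ φ W) (h : ℝ) : RatioDependsOnLength fun W => φ W ^ h := by
  intro I I' J hII'
  simp only [← Real.mul_rpow (hφ0 _) (hφ0 _), hφ I I' J hII']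

variable [Fintype α] [DecidableEq α]

@[simp]
lemma mem_wordsOfLength {m : ℕ} {W : List α} : W ∈ wordsOfLength α m ↔ W.length = m := by
  constructor
  · intro hW
    obtain ⟨v, -, rfl⟩ := mem_image.mp hW
    exact List.length_ofFn
  · rintro rfl
    exact mem_image.mpr ⟨W.get, mem_univ _, List.ofFn_get W⟩

lemma card_wordsOfLength (m : ℕ) : #(wordsOfLength α m) = Fintype.card α ^ m := by
  rw [wordsOfLength, card_image_of_injective _ List.ofFn_injective, card_univ, Fintype.card_fun,
    Fintype.card_fin]

lemma wordsOfLength_zero : wordsOfLength α 0 = {[]} := by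
  ext W
  simp

lemma wordsOfLength_succ (d : ℕ) :
    wordsOfLength α (d + 1) = (wordsOfLength α d ×ˢ univ).image (fun p => p.1 ++ [p.2]) := by
  ext W
  simp only [mem_wordsOfLength, mem_image, mem_product, mem_univ, and_true, Prod.exists]
  constructor
  · intro hW
    have hne : W ≠ [] := List.ne_nil_of_length_pos (by omega)
    exact ⟨W.dropLast, W.getLast hne, by simp [hW], List.dropLast_append_getLast hne⟩
  · rintro ⟨V, j, hV, rfl⟩
    simp [hV]

lemma sum_wordsOfLength_succ {β : Type*} [AddCommMonoid β] (d : ℕ) (g : List α → β) :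
    ∑ V ∈ wordsOfLength α (d + 1), g V = ∑ V ∈ wordsOfLength α d, ∑ j, g (V ++ [j]) := by
  rw [wordsOfLength_succ, sum_image, sum_product]
  intro p _ q _ hpq
  simpa [Prod.ext_iff] using hpq

def IsCylinderAdditive (f : List α → ℝ) : Prop :=
  ∀ W, f W = ∑ j, f (W ++ [j])

lemma IsCylinderAdditive.eq_sum_wordsOfLength {f : List α → ℝ} (hf : IsCylinderAdditive f)
    (W : List α) (d : ℕ) : f W = ∑ V ∈ wordsOfLength α d, f (W ++ V) := by
  induction d with
  | zero => simp [wordsOfLength_zero]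
  | succ d ih =>
    rw [sum_wordsOfLength_succ, ih]
    refine sum_congr rfl fun V _ => ?_
    simp only [hf (W ++ V), List.append_assoc]

def levelSum (φ : List α → ℝ) (m : ℕ) : ℝ :=
  ∑ V ∈ wordsOfLength α m, φ V

noncomputable def normalizedWeight (φ : List α → ℝ) (W : List α) : ℝ :=
  φ W / levelSum φ W.length

variable {φ : List α → ℝ}

lemma levelSum_pos [Nonempty α] (hφ : ∀ W, 0 < φ W) (m : ℕ) : 0 < levelSum φ m :=
  sum_pos (fun W _ => hφ W) ⟨List.replicate m (Classical.arbitrary α), by simp⟩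

lemma levelSum_succ_mul (hratio : RatioDependsOnLength φ) (W : List α) :
    levelSum φ (W.length + 1) * φ W = levelSum φ W.length * ∑ j, φ (W ++ [j]) := by
  rw [levelSum, levelSum, sum_wordsOfLength_succ, sum_mul, sum_mul]
  refine sum_congr rfl fun V hV => ?_
  rw [sum_mul, mul_sum]
  refine sum_congr rfl fun j _ => ?_
  rw [← hratio W V [j] (mem_wordsOfLength.mp hV).symm, mul_comm]

lemma isCylinderAdditive_normalizedWeight [Nonempty α] (hφ : ∀ W, 0 < φ W)
    (hratio : RatioDependsOnLength φ) : IsCylinderAdditive (normalizedWeight φ) := by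
  intro W
  simp only [normalizedWeight, List.length_append, List.length_singleton, ← sum_div]
  rw [div_eq_div_iff (levelSum_pos hφ _).ne' (levelSum_pos hφ _).ne']
  linear_combination levelSum_succ_mul hratio W

lemma levelSum_one (m : ℕ) : levelSum (fun _ : List α => (1 : ℝ)) m = Fintype.card α ^ m := by
  simp [levelSum, card_wordsOfLength]

lemma normalizedWeight_nil (hφ : φ [] ≠ 0) : normalizedWeight φ [] = 1 := by
  simp [normalizedWeight, levelSum, wordsOfLength_zero, hφ]

end Words

lemma Finset.forall_eq_sum_mul_of_sum_mul_le {ι : Type*} {s : Finset ι} {a w : ι → ℝ}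
    (hw : ∀ i ∈ s, 0 < w i) (hw1 : 1 ≤ ∑ i ∈ s, w i) (ha : ∀ i ∈ s, 0 ≤ a i)
    (hle : ∀ i ∈ s, ∑ j ∈ s, a j * w j ≤ a i) : ∀ i ∈ s, a i = ∑ j ∈ s, a j * w j := by
  set S := ∑ j ∈ s, a j * w j
  have hnonneg : ∀ i ∈ s, 0 ≤ (a i - S) * w i :=
    fun i hi => mul_nonneg (sub_nonneg.mpr (hle i hi)) (hw i hi).le
  have hzero : ∑ i ∈ s, (a i - S) * w i = 0 := by
    refine le_antisymm ?_ (sum_nonneg hnonneg)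
    have hS : S ≤ S * ∑ i ∈ s, w i :=
      le_mul_of_one_le_right (sum_nonneg fun i hi => mul_nonneg (ha i hi) (hw i hi).le) hw1
    simp only [sub_mul, sum_sub_distrib, ← mul_sum]
    linarith
  intro i hi
  rcases mul_eq_zero.mp ((sum_eq_zero_iff_of_nonneg hnonneg).mp hzero i hi) with h | h
  · linarith
  · exact absurd h (hw i hi).ne'

namespace IsCylinderCover

variable {N n : ℕ} {R : Finset (List (Fin N))}

lemma exists_prefix [NeZero N] (hR : IsCylinderCover N n R) {V : List (Fin N)}
    (hV : n ≤ V.length) : ∃ I ∈ R, I <+: V := by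
  obtain ⟨I, hI, hIx⟩ := hR.2 fun k => V.getD k 0
  have hIV : I.length ≤ V.length := (hR.1 I hI).trans hV
  refine ⟨I, hI, List.prefix_iff_eq_take.mpr (List.ext_getElem (by simp [hIV]) fun k hk _ => ?_)⟩
  rw [List.getElem_of_eq hIx hk]
  simp [List.getElem?_eq_getElem (hk.trans_le hIV)]

lemma nonempty [NeZero N] (hR : IsCylinderCover N n R) : R.Nonempty :=
  let ⟨I, hI, _⟩ := hR.exists_prefix (V := List.replicate n 0) (by simp)
  ⟨I, hI⟩

lemma apply_nil_le_sum [NeZero N] (hR : IsCylinderCover N n R) {f : List (Fin N) → ℝ}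
    (hf0 : ∀ W, 0 ≤ f W) (hf : IsCylinderAdditive f) : f [] ≤ ∑ I ∈ R, f I := by
  set S := R.sigma fun I => wordsOfLength (Fin N) (n - I.length)
  have hsub : wordsOfLength (Fin N) n ⊆ S.image fun p => p.1 ++ p.2 := by
    intro V hV
    obtain ⟨I, hI, U, rfl⟩ := hR.exists_prefix (mem_wordsOfLength.mp hV).ge
    refine mem_image.mpr ⟨⟨I, U⟩, mem_sigma.mpr ⟨hI, ?_⟩, rfl⟩
    simp only [mem_wordsOfLength, List.length_append] at hV ⊢
    omega
  calc f [] = ∑ V ∈ wordsOfLength (Fin N) n, f V := by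
        simpa using hf.eq_sum_wordsOfLength [] n
    _ ≤ ∑ V ∈ S.image fun p => p.1 ++ p.2, f V :=
        sum_le_sum_of_subset_of_nonneg hsub fun V _ _ => hf0 V
    _ ≤ ∑ p ∈ S, f (p.1 ++ p.2) := sum_image_le_of_nonneg fun V _ => hf0 V
    _ = ∑ I ∈ R, f I := by
        rw [sum_sigma]
        exact sum_congr rfl fun I _ => (hf.eq_sum_wordsOfLength I _).symm

lemma levelSum_eq_sum_of_sum_le [NeZero N] (hR : IsCylinderCover N n R)
    {φ : List (Fin N) → ℝ} (hφ : ∀ W, 0 < φ W) (hratio : RatioDependsOnLength φ)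
    (hle : ∀ I ∈ R, ∑ J ∈ R, φ J ≤ levelSum φ I.length) :
    ∀ I ∈ R, levelSum φ I.length = ∑ J ∈ R, φ J := by
  have hw : ∀ W, 0 < normalizedWeight φ W := fun W => div_pos (hφ W) (levelSum_pos hφ _)
  have hφ_eq : ∀ W, levelSum φ W.length * normalizedWeight φ W = φ W :=
    fun W => mul_div_cancel₀ _ (levelSum_pos hφ _).ne'
  simp only [← hφ_eq] at hle ⊢
  refine forall_eq_sum_mul_of_sum_mul_le (fun W _ => hw W) ?_
    (fun W _ => (levelSum_pos hφ _).le) hle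
  simpa [normalizedWeight_nil (hφ []).ne'] using
    hR.apply_nil_le_sum (fun W => (hw W).le) (isCylinderAdditive_normalizedWeight hφ hratio)

lemma eq_wordsOfLength [NeZero N] (hR : IsCylinderCover N n R) {m : ℕ}
    (hlen : ∀ I ∈ R, I.length = m) : R = wordsOfLength (Fin N) m := by
  obtain ⟨I₀, hI₀⟩ := hR.nonempty
  have hmn : m ≤ n := hlen I₀ hI₀ ▸ hR.1 I₀ hI₀
  ext V
  refine ⟨fun hV => mem_wordsOfLength.mpr (hlen V hV), fun hV => ?_⟩
  rw [mem_wordsOfLength] at hV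
  obtain ⟨I, hI, hIV⟩ := hR.exists_prefix (V := V ++ List.replicate (n - m) 0) (by simp; omega)
  have hIm := hlen I hI
  have hIV' : I <+: V := List.prefix_of_prefix_length_le hIV (List.prefix_append V _) (by omega)
  exact hIV'.eq_of_length (by omega) ▸ hI

end IsCylinderCover

lemma isCylinderCover_wordsOfLength {N n m : ℕ} (hm : m ≤ n) :
    IsCylinderCover N n (wordsOfLength (Fin N) m) :=
  ⟨fun I hI => (mem_wordsOfLength.mp hI).trans_le hm,
    fun x => ⟨List.ofFn fun k : Fin m => x k, by simp, List.ext_getElem (by simp) (by simp)⟩⟩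

theorem optimal_cover_is_a_generation_general (N : ℕ) (hN : 2 ≤ N) (n : ℕ)
    (D : List (Fin N) → ℝ) (hDpos : ∀ I, 0 < D I)
    (hDratio : ∀ I I' J : List (Fin N), I.length = I'.length →
      D (I ++ J) * D I' = D (I' ++ J) * D I)
    (h : ℝ)
    (R : Finset (List (Fin N))) (hR : IsCylinderCover N n R)
    (hopt : ∀ R' : Finset (List (Fin N)), IsCylinderCover N n R' →
      ∑ I ∈ R, D I ^ h ≤ ∑ I ∈ R', D I ^ h)
    (hcard : ∀ R' : Finset (List (Fin N)), IsCylinderCover N n R' →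
      ∑ I ∈ R', D I ^ h = ∑ I ∈ R, D I ^ h → R.card ≤ R'.card) :
    ∃ m ≤ n, R = (Finset.univ : Finset (Fin m → Fin N)).image List.ofFn := by
  have : NeZero N := ⟨by omega⟩
  have hlevel : ∀ I ∈ R, levelSum (fun W => D W ^ h) I.length = ∑ J ∈ R, D J ^ h :=
    hR.levelSum_eq_sum_of_sum_le (fun W => Real.rpow_pos_of_pos (hDpos W) h)
      (RatioDependsOnLength.rpow hDratio (fun W => (hDpos W).le) h)
      fun I hI => hopt _ (isCylinderCover_wordsOfLength (hR.1 I hI))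
  obtain ⟨I₀, hI₀, hI₀min⟩ := R.exists_min_image List.length hR.nonempty
  have hcard₀ : #R ≤ N ^ I₀.length := by
    simpa [card_wordsOfLength] using
      hcard _ (isCylinderCover_wordsOfLength (hR.1 I₀ hI₀)) (hlevel I₀ hI₀)
  have hcount : ∀ I ∈ R, (N : ℝ) ^ I.length = #R := by
    have := hR.levelSum_eq_sum_of_sum_le (φ := fun _ => 1) (fun _ => one_pos)
      (fun _ _ _ _ => rfl) fun I hI => ?_
    · simpa [levelSum_one] using this
    · simp only [sum_const, nsmul_one, levelSum_one, Fintype.card_fin]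
      exact_mod_cast hcard₀.trans (Nat.pow_le_pow_right (by omega) (hI₀min I hI))
  refine ⟨I₀.length, hR.1 I₀ hI₀, hR.eq_wordsOfLength fun I hI => Nat.pow_right_injective hN ?_⟩
  exact_mod_cast (hcount I hI).trans (hcount I₀ hI₀).symm

theorem optimal_cover_is_a_generation (N : ℕ) (hN : 2 ≤ N) (n : ℕ)
    (D : List (Fin N) → ℝ) (hDpos : ∀ I, 0 < D I)
    (hDratio : ∀ I I' J : List (Fin N), I.length = I'.length →
      D (I ++ J) * D I' = D (I' ++ J) * D I)
    (h : ℝ) (hh : 0 < h)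
    (R : Finset (List (Fin N))) (hR : IsCylinderCover N n R)
    (hopt : ∀ R' : Finset (List (Fin N)), IsCylinderCover N n R' →
      ∑ I ∈ R, D I ^ h ≤ ∑ I ∈ R', D I ^ h)
    (hcard : ∀ R' : Finset (List (Fin N)), IsCylinderCover N n R' →
      ∑ I ∈ R', D I ^ h = ∑ I ∈ R, D I ^ h → R.card ≤ R'.card) :
    ∃ m ≤ n, R = (Finset.univ : Finset (Fin m → Fin N)).image List.ofFn :=
  optimal_cover_is_a_generation_general N hN n D hDpos hDratio h R hR hopt hcard
end

section
/- Let (λ_k) be a sequence of reals bounded in [c, C] with 0 < c ≤ C and liminf over δ' < 1 behavior: for every δ < 1, liminf_n δ^n ∏_{k=1}^n λ_k = 0. Then there exist δ_j < 1 with δ_j → 1 and a strictly increasing sequence (n_j) of integers such that liminf_{K→∞} ∏_{j=1}^K ∏_{ℓ=n_j+1}^{n_{j+1}} δ_j λ_ℓ = 0. -/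
/-!
If `δ ^ m * ∏_{k<m} λ_k` ever tends to infinity for some `δ < 1`, take `n_j = j` and any
damping factors `δ_j ∈ (δ, 1)` tending to `1`: the damped products then tend to infinity, and a
real `liminf` of a sequence tending to infinity is `0` by convention.

Otherwise, for every `δ < 1` the products `δ ^ m * ∏_{k<m} λ_k` come arbitrarily close to `0`
infinitely often. Fix increasing `δ_j ∈ (0, 1)` tending to `1` and choose `n_{j+1} > n_j` with
`δ_j ^ n_{j+1} * ∏_{k<n_{j+1}} λ_k ≤ 1 / (j + 1)`. Since the `δ_j` increase, the first `j + 1`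
damped blocks are at most `δ_j ^ n_{j+1} * ∏_{ℓ=1}^{n_{j+1}} λ_ℓ`, which is within a factor
`C / c` of that quantity, so the damped block products tend to `0`.
-/

open scoped BigOperators
open Filter Finset Topology

theorem not_isCoboundedUnder_ge_iff_tendsto_atTop {α β : Type*} [LinearOrder β] [NoMaxOrder β]
    {l : Filter α} {f : α → β} : ¬l.IsCoboundedUnder (· ≥ ·) f ↔ Tendsto f l atTop := by
  refine ⟨fun h => tendsto_atTop.2 fun b => ?_, fun h ⟨b, hb⟩ => ?_⟩
  · simp only [IsCoboundedUnder, IsCobounded, eventually_map, not_exists, not_forall] at h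
    obtain ⟨a, ha, hab⟩ := h b
    exact ha.mono fun x hx => (le_of_not_ge hab).trans hx
  · obtain ⟨a, hba⟩ := exists_gt b
    exact (hb a (h.eventually_ge_atTop a)).not_gt hba

theorem liminf_eq_zero_of_tendsto_atTop {α : Type*} {l : Filter α} {f : α → ℝ}
    (h : Tendsto f l atTop) : l.liminf f = 0 :=
  Real.liminf_of_not_isCoboundedUnder (not_isCoboundedUnder_ge_iff_tendsto_atTop.2 h)

theorem tendsto_atTop_or_frequently_lt_of_liminf_eq_zero {α : Type*} {l : Filter α}
    {f : α → ℝ} (h : l.liminf f = 0) :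
    Tendsto f l atTop ∨ ∀ ε > 0, ∃ᶠ x in l, f x < ε := by
  by_cases hf : l.IsCoboundedUnder (· ≥ ·) f
  · exact Or.inr fun ε hε => frequently_lt_of_liminf_lt hf (h ▸ hε)
  · exact Or.inl (not_isCoboundedUnder_ge_iff_tendsto_atTop.1 hf)

theorem exists_strictMono_zero_forall_succ {p : ℕ → ℕ → Prop}
    (h : ∀ j, ∃ᶠ m in atTop, p j m) :
    ∃ n : ℕ → ℕ, StrictMono n ∧ n 0 = 0 ∧ ∀ j, p j (n (j + 1)) := by
  obtain ⟨φ, hφ, hpφ⟩ := extraction_forall_of_frequently fun j =>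
    (h j).and_eventually (eventually_gt_atTop 0)
  refine ⟨fun | 0 => 0 | j + 1 => φ j, strictMono_nat_of_lt_succ fun j => ?_, rfl,
    fun j => (hpφ j).1⟩
  cases j with
  | zero => exact (hpφ 0).2
  | succ j => exact hφ j.lt_succ_self

def dampedBlockProd {M : Type*} [CommMonoid M] (δ a : ℕ → M) (n : ℕ → ℕ) (K : ℕ) : M :=
  ∏ j ∈ range K, ∏ ℓ ∈ Ico (n j + 1) (n (j + 1) + 1), δ j * a ℓ

theorem dampedBlockProd_eq {M : Type*} [CommMonoid M] (δ a : ℕ → M) {n : ℕ → ℕ}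
    (hn : Monotone n) (K : ℕ) :
    dampedBlockProd δ a n K =
      (∏ j ∈ range K, δ j ^ (n (j + 1) - n j)) * ∏ ℓ ∈ Ico (n 0 + 1) (n K + 1), a ℓ := by
  induction K with
  | zero => simp [dampedBlockProd]
  | succ K ih =>
    have hK : n K + 1 ≤ n (K + 1) + 1 := Nat.succ_le_succ (hn K.le_succ)
    rw [dampedBlockProd, prod_range_succ, ← dampedBlockProd, ih, prod_mul_distrib,
      prod_const, Nat.card_Ico, prod_range_succ,
      ← prod_Ico_consecutive a (Nat.succ_le_succ (hn (Nat.zero_le K))) hK,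
      Nat.add_sub_add_right]
    exact mul_mul_mul_comm _ _ _ _

section DampingFactors

variable {R : Type*} [CommSemiring R] [PartialOrder R] [IsOrderedRing R]
  {δ : ℕ → R} {n : ℕ → ℕ} {K : ℕ}

theorem prod_pow_tsub_le (hn : Monotone n) {D : R} (hδ0 : ∀ j < K, 0 ≤ δ j)
    (hδD : ∀ j < K, δ j ≤ D) :
    ∏ j ∈ range K, δ j ^ (n (j + 1) - n j) ≤ D ^ (n K - n 0) := by
  rw [← sum_range_tsub hn, ← prod_pow_eq_pow_sum]
  exact prod_le_prod (fun j hj => pow_nonneg (hδ0 j (mem_range.1 hj)) _)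
    fun j hj => pow_le_pow_left₀ (hδ0 j (mem_range.1 hj)) (hδD j (mem_range.1 hj)) _

theorem pow_tsub_le_prod_pow (hn : Monotone n) {d : R} (hd : 0 ≤ d) (hdδ : ∀ j < K, d ≤ δ j) :
    d ^ (n K - n 0) ≤ ∏ j ∈ range K, δ j ^ (n (j + 1) - n j) := by
  rw [← sum_range_tsub hn, ← prod_pow_eq_pow_sum]
  exact prod_le_prod (fun _ _ => pow_nonneg hd _)
    fun j hj => pow_le_pow_left₀ hd (hdδ j (mem_range.1 hj)) _

end DampingFactors

theorem mul_prod_Ico_one_eq {M : Type*} [CommMonoid M] (a : ℕ → M) (N : ℕ) :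
    a 0 * ∏ ℓ ∈ Ico 1 (N + 1), a ℓ = (∏ k ∈ range N, a k) * a N := by
  rw [← prod_range_eq_mul_Ico a N.succ_pos, prod_range_succ]

section BoundedSequence

variable {a : ℕ → ℝ} {c C : ℝ}

theorem prod_Ico_one_le (hc : 0 < c) (ha : ∀ k, c ≤ a k ∧ a k ≤ C) (N : ℕ) :
    ∏ ℓ ∈ Ico 1 (N + 1), a ℓ ≤ C / c * ∏ k ∈ range N, a k := by
  have ha0 : ∀ k, 0 ≤ a k := fun k => hc.le.trans (ha k).1
  rw [div_mul_eq_mul_div, le_div_iff₀ hc]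
  calc (∏ ℓ ∈ Ico 1 (N + 1), a ℓ) * c ≤ (∏ ℓ ∈ Ico 1 (N + 1), a ℓ) * a 0 :=
        mul_le_mul_of_nonneg_left (ha 0).1 (prod_nonneg fun k _ => ha0 k)
    _ = (∏ k ∈ range N, a k) * a N := by rw [mul_comm, mul_prod_Ico_one_eq]
    _ ≤ (∏ k ∈ range N, a k) * C :=
        mul_le_mul_of_nonneg_left (ha N).2 (prod_nonneg fun k _ => ha0 k)
    _ = C * ∏ k ∈ range N, a k := mul_comm _ _

theorem div_mul_prod_le_prod_Ico_one (hc : 0 < c) (ha : ∀ k, c ≤ a k ∧ a k ≤ C) (N : ℕ) :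
    c / C * ∏ k ∈ range N, a k ≤ ∏ ℓ ∈ Ico 1 (N + 1), a ℓ := by
  have ha0 : ∀ k, 0 ≤ a k := fun k => hc.le.trans (ha k).1
  have hC : 0 < C := hc.trans_le ((ha 0).1.trans (ha 0).2)
  rw [div_mul_eq_mul_div, div_le_iff₀ hC]
  calc c * ∏ k ∈ range N, a k ≤ a N * ∏ k ∈ range N, a k :=
        mul_le_mul_of_nonneg_right (ha N).1 (prod_nonneg fun k _ => ha0 k)
    _ = a 0 * ∏ ℓ ∈ Ico 1 (N + 1), a ℓ := by rw [mul_prod_Ico_one_eq, mul_comm]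
    _ ≤ C * ∏ ℓ ∈ Ico 1 (N + 1), a ℓ :=
        mul_le_mul_of_nonneg_right (ha 0).2 (prod_nonneg fun k _ => ha0 k)
    _ = (∏ ℓ ∈ Ico 1 (N + 1), a ℓ) * C := mul_comm _ _

theorem tendsto_dampedBlockProd_id_atTop (hc : 0 < c) (ha : ∀ k, c ≤ a k ∧ a k ≤ C)
    {δ : ℕ → ℝ} {d : ℝ} (hd : 0 < d) (hdδ : ∀ j, d ≤ δ j)
    (hblow : Tendsto (fun m => d ^ m * ∏ k ∈ range m, a k) atTop atTop) :
    Tendsto (dampedBlockProd δ a id) atTop atTop := by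
  have hC : 0 < C := hc.trans_le ((ha 0).1.trans (ha 0).2)
  refine tendsto_atTop_mono (fun K => ?_) (hblow.const_mul_atTop (div_pos hc hC))
  rw [dampedBlockProd_eq δ a monotone_id]
  calc c / C * (d ^ K * ∏ k ∈ range K, a k) = d ^ K * (c / C * ∏ k ∈ range K, a k) := by ring
    _ ≤ _ := mul_le_mul (pow_tsub_le_prod_pow monotone_id hd.le fun j _ => hdδ j)
        (div_mul_prod_le_prod_Ico_one hc ha K)
        (mul_nonneg (div_nonneg hc.le hC.le) (prod_nonneg fun k _ => hc.le.trans (ha k).1))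
        (prod_nonneg fun j _ => pow_nonneg (hd.le.trans (hdδ j)) _)

theorem tendsto_dampedBlockProd_nhds_zero (hc : 0 < c) (ha : ∀ k, c ≤ a k ∧ a k ≤ C)
    {δ : ℕ → ℝ} (hδ0 : ∀ j, 0 ≤ δ j) (hδ : Monotone δ) {n : ℕ → ℕ} (hn : Monotone n)
    (hn0 : n 0 = 0) {ε : ℕ → ℝ} (hε : Tendsto ε atTop (𝓝 0))
    (hsmall : ∀ j, δ j ^ n (j + 1) * ∏ k ∈ range (n (j + 1)), a k ≤ ε j) :
    Tendsto (dampedBlockProd δ a n) atTop (𝓝 0) := by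
  have ha0 : ∀ k, 0 ≤ a k := fun k => hc.le.trans (ha k).1
  rw [← tendsto_add_atTop_iff_nat 1]
  refine tendsto_of_tendsto_of_tendsto_of_le_of_le tendsto_const_nhds
    (by simpa using hε.const_mul (C / c)) (fun K => ?_) fun K => ?_
  · exact prod_nonneg fun j _ => prod_nonneg fun ℓ _ => mul_nonneg (hδ0 j) (ha0 ℓ)
  · have hdamp : ∏ j ∈ range (K + 1), δ j ^ (n (j + 1) - n j) ≤ δ K ^ n (K + 1) := by
      simpa [hn0] using prod_pow_tsub_le hn (fun j _ => hδ0 j) fun j hj => hδ (Nat.le_of_lt_succ hj)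
    rw [dampedBlockProd_eq δ a hn, hn0]
    calc _ ≤ δ K ^ n (K + 1) * (C / c * ∏ k ∈ range (n (K + 1)), a k) :=
          mul_le_mul hdamp (prod_Ico_one_le hc ha _) (prod_nonneg fun k _ => ha0 k) (pow_nonneg (hδ0 K) _)
      _ = C / c * (δ K ^ n (K + 1) * ∏ k ∈ range (n (K + 1)), a k) := by ring
      _ ≤ C / c * ε K :=
          mul_le_mul_of_nonneg_left (hsmall K) (div_nonneg (hc.le.trans ((ha 0).1.trans (ha 0).2)) hc.le)

end BoundedSequence

theorem blockwise_damping_lemma_general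
    (lam : ℕ → ℝ) (c C : ℝ) (hc : 0 < c)
    (hbd : ∀ k, c ≤ lam k ∧ lam k ≤ C)
    (hdamp : ∀ δ : ℝ, 0 < δ → δ < 1 →
      atTop.liminf (fun n => δ ^ n * ∏ k ∈ Finset.range n, lam k) = 0) :
    ∃ δ' : ℕ → ℝ, (∀ j, 0 < δ' j) ∧ (∀ j, δ' j < 1) ∧
      Tendsto δ' atTop (nhds 1) ∧
      ∃ n : ℕ → ℕ, StrictMono n ∧
        atTop.liminf (fun K => ∏ j ∈ Finset.range K,
          ∏ ℓ ∈ Finset.Ico (n j + 1) (n (j + 1) + 1), δ' j * lam ℓ) = 0 := by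
  by_cases hblow : ∃ d, 0 < d ∧ d < 1 ∧
      Tendsto (fun m => d ^ m * ∏ k ∈ range m, lam k) atTop atTop
  · obtain ⟨d, hd0, hd1, hd⟩ := hblow
    obtain ⟨δ', -, hδ'mem, hδ'⟩ := exists_seq_strictMono_tendsto' hd1
    exact ⟨δ', fun j => hd0.trans (hδ'mem j).1, fun j => (hδ'mem j).2, hδ', id, strictMono_id,
      liminf_eq_zero_of_tendsto_atTop <|
        tendsto_dampedBlockProd_id_atTop hc hbd hd0 (fun j => (hδ'mem j).1.le) hd⟩
  · push Not at hblow
    obtain ⟨δ', hδ'mono, hδ'mem, hδ'⟩ := exists_seq_strictMono_tendsto' (zero_lt_one' ℝ)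
    have hfreq : ∀ j, ∃ᶠ m in atTop,
        δ' j ^ m * ∏ k ∈ range m, lam k < 1 / ((j : ℝ) + 1) := fun j =>
      ((tendsto_atTop_or_frequently_lt_of_liminf_eq_zero
        (hdamp _ (hδ'mem j).1 (hδ'mem j).2)).resolve_left
        (hblow _ (hδ'mem j).1 (hδ'mem j).2)) _ Nat.one_div_pos_of_nat
    obtain ⟨n, hn, hn0, hnsmall⟩ := exists_strictMono_zero_forall_succ hfreq
    exact ⟨δ', fun j => (hδ'mem j).1, fun j => (hδ'mem j).2, hδ', n, hn,
      (tendsto_dampedBlockProd_nhds_zero hc hbd (fun j => (hδ'mem j).1.le) hδ'mono.monotone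
        hn.monotone hn0 tendsto_one_div_add_atTop_nhds_zero_nat fun j => (hnsmall j).le).liminf_eq⟩

theorem blockwise_damping_lemma
    (lam : ℕ → ℝ) (c C : ℝ) (hc : 0 < c) (hcC : c ≤ C)
    (hbd : ∀ k, c ≤ lam k ∧ lam k ≤ C)
    (hdamp : ∀ δ : ℝ, 0 < δ → δ < 1 →
      atTop.liminf (fun n => δ ^ n * ∏ k ∈ Finset.range n, lam k) = 0) :
    ∃ δ' : ℕ → ℝ, (∀ j, 0 < δ' j) ∧ (∀ j, δ' j < 1) ∧
      Tendsto δ' atTop (nhds 1) ∧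
      ∃ n : ℕ → ℕ, StrictMono n ∧
        atTop.liminf (fun K => ∏ j ∈ Finset.range K,
          ∏ ℓ ∈ Finset.Ico (n j + 1) (n (j + 1) + 1), δ' j * lam ℓ) = 0 :=
  blockwise_damping_lemma_general lam c C hc hbd hdamp
end

section
/- For the system of h-conformal measures ν_k on the Cantor sets X_k (defined on cylinders by ν_k(I) = |(f_{m-1+k} ∘ ⋯ ∘ f_k)'|^{-h}|_I / (λ_{k,h} ⋯ λ_{m-1+k,h}) for |I| = m), the pushforward identity (f_k)_*(ν_k) = ν_{k+1} holds for every k ≥ 0. -/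
open scoped BigOperators
open MeasureTheory

theorem shift_pushforward_of_conformal_measures
    (N : ℕ) (hN : 2 ≤ N) (a : ℕ → Fin N → ℝ)
    (ha : ∀ k i, 0 < a k i ∧ a k i < 1)
    (h : ℝ) (hh : 0 < h)
    (ν : ℕ → Measure (ℕ → Fin N)) (hprob : ∀ k, IsProbabilityMeasure (ν k))
    (hcyl : ∀ (k m : ℕ) (I : Fin m → Fin N),
      ν k {x | ∀ j : Fin m, x j = I j} =
        ENNReal.ofReal ((∏ j : Fin m, a (k + j) (I j) ^ h) /
          ∏ j : Fin m, ∑ i, a (k + j) i ^ h)) :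
    ∀ k, Measure.map (fun x n => x (n + 1)) (ν k) = ν (k + 1) := by
  classical
  intro k
  haveI := hprob k
  haveI := hprob (k + 1)
  have hshift : Measurable (fun x : ℕ → Fin N => fun n => x (n + 1)) :=
    measurable_pi_lambda _ fun n => measurable_pi_apply (n + 1)
  haveI : IsProbabilityMeasure (Measure.map (fun x : ℕ → Fin N => fun n => x (n + 1)) (ν k)) :=
    Measure.isProbabilityMeasure_map hshift.aemeasurable
  set C : Set (Set (ℕ → Fin N)) :=
    {S | ∃ (m : ℕ) (I : Fin m → Fin N), S = {x : ℕ → Fin N | ∀ j : Fin m, x j = I j}} with hC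
  have hcylMeas : ∀ (m : ℕ) (I : Fin m → Fin N),
      MeasurableSet {x : ℕ → Fin N | ∀ j : Fin m, x j = I j} := by
    intro m I
    have : {x : ℕ → Fin N | ∀ j : Fin m, x j = I j}
        = ⋂ j : Fin m, (fun x : ℕ → Fin N => x (j : ℕ)) ⁻¹' {I j} := by
      ext x; simp [Set.mem_iInter]
    rw [this]
    exact MeasurableSet.iInter fun j => (measurable_pi_apply _) (measurableSet_singleton _)
  -- the generated σ-algebra
  have hgen : (inferInstance : MeasurableSpace (ℕ → Fin N)) = MeasurableSpace.generateFrom C := by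
    refine le_antisymm ?_ ?_
    · rw [show (inferInstance : MeasurableSpace (ℕ → Fin N)) = MeasurableSpace.pi from rfl]
      refine iSup_le fun n => Measurable.comap_le ?_
      refine @measurable_to_countable' (Fin N) (ℕ → Fin N) _ _
        (MeasurableSpace.generateFrom C) _ fun i => ?_
      · have heq : ((fun x : ℕ → Fin N => x n) ⁻¹' {i})
            = ⋃ (I : Fin (n + 1) → Fin N) (_ : I (Fin.last n) = i),
                {x : ℕ → Fin N | ∀ j : Fin (n + 1), x j = I j} := by
          ext x
          simp only [Set.mem_preimage, Set.mem_singleton_iff, Set.mem_iUnion, Set.mem_setOf_eq,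
            ]
          constructor
          · intro hx
            exact ⟨fun j => x (j : ℕ), by simpa [Fin.val_last] using hx, fun j => rfl⟩
          · rintro ⟨I, hI, hxI⟩
            have := hxI (Fin.last n)
            simp only [Fin.val_last] at this
            rw [this, hI]
        rw [heq]
        refine MeasurableSet.iUnion fun I => MeasurableSet.iUnion fun _ => ?_
        exact MeasurableSpace.measurableSet_generateFrom ⟨n + 1, I, rfl⟩
    · refine MeasurableSpace.generateFrom_le ?_
      rintro s ⟨m, I, rfl⟩
      exact hcylMeas m I
  have hpi : IsPiSystem C := by
    have key : ∀ (m m' : ℕ) (hm : m ≤ m') (I : Fin m → Fin N) (I' : Fin m' → Fin N),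
        ({x : ℕ → Fin N | ∀ j : Fin m, x j = I j} ∩
          {x : ℕ → Fin N | ∀ j : Fin m', x j = I' j}).Nonempty →
        ({x : ℕ → Fin N | ∀ j : Fin m, x j = I j} ∩
          {x : ℕ → Fin N | ∀ j : Fin m', x j = I' j}) ∈ C := by
      intro m m' hm I I' ⟨x, hx1, hx2⟩
      have hsub : {x : ℕ → Fin N | ∀ j : Fin m', x j = I' j}
          ⊆ {x : ℕ → Fin N | ∀ j : Fin m, x j = I j} := by
        intro y hy j
        have h1 : y ((Fin.castLE hm j : Fin m') : ℕ) = I' (Fin.castLE hm j) := hy _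
        have h2 : x ((Fin.castLE hm j : Fin m') : ℕ) = I' (Fin.castLE hm j) := hx2 _
        have h3 : x (j : ℕ) = I j := hx1 j
        have hc : ((Fin.castLE hm j : Fin m') : ℕ) = (j : ℕ) := rfl
        rw [hc] at h1 h2
        rw [h1.trans h2.symm, h3]
      rw [Set.inter_eq_self_of_subset_right hsub]
      exact ⟨m', I', rfl⟩
    rintro s ⟨m, I, rfl⟩ t ⟨m', I', rfl⟩ hne
    rcases le_total m m' with hm | hm
    · exact key m m' hm I I' hne
    · rw [Set.inter_comm] at hne ⊢
      exact key m' m hm I' I hne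
  refine ext_of_generate_finite C hgen hpi ?_ ?_
  · rintro s ⟨m, I, rfl⟩
    rw [Measure.map_apply hshift (hcylMeas m I)]
    have hpre : (fun x : ℕ → Fin N => fun n => x (n + 1)) ⁻¹'
        {x : ℕ → Fin N | ∀ j : Fin m, x j = I j}
        = ⋃ i : Fin N, {x : ℕ → Fin N | ∀ j : Fin (m + 1), x j = (Fin.cons i I : Fin (m + 1) → Fin N) j} := by
      ext x
      simp only [Set.mem_preimage, Set.mem_iUnion, Set.mem_setOf_eq]
      constructor
      · intro hx
        refine ⟨x 0, fun j => ?_⟩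
        refine Fin.cases ?_ (fun j' => ?_) j
        · simp
        · have := hx j'
          simpa [Fin.cons_succ, Fin.val_succ] using this
      · rintro ⟨i, hx⟩ j
        have := hx j.succ
        simpa [Fin.cons_succ, Fin.val_succ] using this
    have hdisj : Pairwise (Function.onFun Disjoint fun i : Fin N =>
        {x : ℕ → Fin N | ∀ j : Fin (m + 1), x j = (Fin.cons i I : Fin (m + 1) → Fin N) j}) := by
      intro i i' hii'
      refine Set.disjoint_left.2 fun x hx hx' => hii' ?_
      have h1 := hx (0 : Fin (m + 1))
      have h2 := hx' (0 : Fin (m + 1))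
      simp only [Fin.cons_zero, Fin.val_zero] at h1 h2
      rw [← h1, ← h2]
    rw [hpre, measure_iUnion hdisj fun i => hcylMeas _ _, tsum_fintype]
    simp only [hcyl k (m + 1), hcyl (k + 1) m]
    have hP : ∀ i : Fin N, (∏ j : Fin (m + 1), a (k + (j : ℕ)) ((Fin.cons i I : Fin (m + 1) → Fin N) j) ^ h)
        = a k i ^ h * ∏ j : Fin m, a (k + 1 + (j : ℕ)) (I j) ^ h := by
      intro i
      rw [Fin.prod_univ_succ]
      simp only [Fin.cons_zero, Fin.cons_succ, Fin.val_zero, Fin.val_succ, Nat.add_zero]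
      congr 1
      refine Finset.prod_congr rfl fun j _ => ?_
      have : k + ((j : ℕ) + 1) = k + 1 + (j : ℕ) := by omega
      rw [this]
    have hD : (∏ j : Fin (m + 1), ∑ i, a (k + (j : ℕ)) i ^ h)
        = (∑ i, a k i ^ h) * ∏ j : Fin m, ∑ i, a (k + 1 + (j : ℕ)) i ^ h := by
      rw [Fin.prod_univ_succ]
      simp only [Fin.val_zero, Fin.val_succ, Nat.add_zero]
      congr 1
      refine Finset.prod_congr rfl fun j _ => ?_
      have : k + ((j : ℕ) + 1) = k + 1 + (j : ℕ) := by omega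
      rw [this]
    simp only [hP, hD]
    set P := ∏ j : Fin m, a (k + 1 + (j : ℕ)) (I j) ^ h with hPdef
    set D := ∏ j : Fin m, ∑ i, a (k + 1 + (j : ℕ)) i ^ h with hDdef
    set S0 := ∑ i, a k i ^ h with hS0def
    haveI : NeZero N := ⟨by omega⟩
    have hpos : ∀ (k' : ℕ) (i : Fin N), 0 < a k' i ^ h :=
      fun k' i => Real.rpow_pos_of_pos (ha k' i).1 h
    have hS0 : 0 < S0 :=
      Finset.sum_pos (fun i _ => hpos k i) Finset.univ_nonempty
    have hDpos : 0 < D :=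
      Finset.prod_pos fun j _ => Finset.sum_pos (fun i _ => hpos _ i) Finset.univ_nonempty
    have hPpos : 0 < P := Finset.prod_pos fun j _ => hpos _ _
    rw [← ENNReal.ofReal_sum_of_nonneg
      (fun i _ => le_of_lt (div_pos (mul_pos (hpos k i) hPpos) (mul_pos hS0 hDpos)))]
    congr 1
    rw [← Finset.sum_div, ← Finset.sum_mul]
    rw [← hS0def, mul_div_mul_left P D (ne_of_gt hS0)]
  · simp [measure_univ]
end

section
/- There is a constant κ > 0 depending only on M, a_lower, a_upper, Q, N such that every admissible Cantor set X has logarithmic capacity Cap(X) ≥ κ. Specifically, choosing h > 0 small with N a_lower^h > 1, the h-conformal measure ν_h has uniformly bounded logarithmic potential: U_{ν_h}(z) = ∫ log(1/|z-w|) dν_h(w) ≤ I_0 < ∞ for all z ∈ X, where I_0 depends only on the construction parameters; hence Cap(X) ≥ exp(-I_0). -/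
open scoped BigOperators
open MeasureTheory

/-- The logarithmic potential of a measure `μ` on `ℂ` at a point `z`. -/
noncomputable def logPotential (μ : Measure ℂ) (z : ℂ) : ℝ :=
  ∫ w, Real.log (1 / ‖z - w‖) ∂μ

/-- The logarithmic energy of a measure on `ℂ`. -/
noncomputable def logEnergy (μ : Measure ℂ) : ℝ :=
  ∫ z, logPotential μ z ∂μ

/-- The logarithmic capacity of a set `X ⊆ ℂ`: the supremum of `exp(-I(μ))`
over probability measures supported on `X`. -/
noncomputable def logCapacity (X : Set ℂ) : ℝ :=
  sSup {c : ℝ | ∃ μ : Measure ℂ, IsProbabilityMeasure μ ∧ μ Xᶜ = 0 ∧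
    c = Real.exp (-(logEnergy μ))}


/-!
By the annulus separation, a ball of radius `csep * al ^ k` about a point `z ∈ X` meets `X` only
inside the level-`k` cylinder of `z`, so its `ν`-mass is at most `(au ^ h) ^ k`. If `w` lies in
exactly the first `m` of these balls then `log (1 / |z - w|) ≤ -log csep + m * log (1 / al)`, and
integrating the number of balls containing `w` bounds the potential by a geometric series in
`au ^ h`. Since `X` has diameter at most one, every probability measure on `X` has nonnegative
energy, so the capacity is at least `exp (-I₀)`.
-/

section CantorPotential

open Metric Set ENNReal

theorem natCast_le_tsum_indicator_one {ι : Type*} {s : ℕ → Set ι} {w : ι} {m : ℕ}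
    (h : ∀ k < m, w ∈ s k) : (m : ℝ≥0∞) ≤ ∑' k, (s k).indicator 1 w :=
  calc (m : ℝ≥0∞) = ∑ k ∈ Finset.range m, (s k).indicator 1 w := by
        rw [Finset.sum_congr rfl fun k hk => indicator_of_mem (h k (Finset.mem_range.1 hk)) 1]
        simp
    _ ≤ _ := ENNReal.sum_le_tsum _

variable {α : Type*} [PseudoMetricSpace α]

theorem ball_inter_subset_of_separated {ι : Type*} (Q : ∀ n : ℕ, (Fin n → ι) → Set α)
    {r : ℕ → ℝ} (hr : Antitone r)
    (hnest : ∀ n (I : Fin (n + 1) → ι), Q (n + 1) I ⊆ Q n (Fin.init I))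
    (hsep : ∀ n (I : Fin (n + 1) → ι) (z w : α), z ∈ Q (n + 1) I →
      w ∈ Q n (Fin.init I) → w ∉ Q (n + 1) I → r (n + 1) ≤ dist z w) :
    ∀ n (I : Fin n → ι) (z : α), z ∈ Q n I → ball z (r n) ∩ Q 0 ![] ⊆ Q n I := by
  intro n
  induction n with
  | zero => intro I z _; rw [Subsingleton.elim I ![]]; exact inter_subset_right
  | succ n ih =>
    rintro I z hz w ⟨hwz, hw₀⟩
    by_contra hw
    have hw' : w ∈ Q n (Fin.init I) :=
      ih (Fin.init I) z (hnest n I hz) ⟨ball_subset_ball (hr n.le_succ) hwz, hw₀⟩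
    have hfar := hsep n I z w hz hw' hw
    rw [mem_ball, dist_comm] at hwz
    linarith

theorem isBounded_of_diam_pos {s : Set α} (hs : 0 < diam s) : Bornology.IsBounded s := by
  by_contra hunb
  exact hs.ne' (diam_eq_zero_of_unbounded hunb)

theorem measure_ball_le_of_mem_cylinder [MeasurableSpace α] {ι : Type*}
    (Q : ∀ n : ℕ, (Fin n → ι) → Set α) {X : Set α} {ν : Measure α} {c a : ℝ} (hc : 0 ≤ c)
    (ha₀ : 0 ≤ a) (ha₁ : a ≤ 1) (hdiam : ∀ n (I : Fin n → ι), a ^ n ≤ diam (Q n I))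
    (hnest : ∀ n (I : Fin (n + 1) → ι), Q (n + 1) I ⊆ Q n (Fin.init I))
    (hsep : ∀ n (I : Fin (n + 1) → ι) (z w : α), z ∈ Q (n + 1) I →
      w ∈ Q n (Fin.init I) → w ∉ Q (n + 1) I → c * diam (Q (n + 1) I) ≤ dist z w)
    (hXQ₀ : X ⊆ Q 0 ![]) (hν : ν Xᶜ = 0) {k : ℕ} {I : Fin k → ι} {z : α} (hz : z ∈ Q k I) :
    ν (ball z (c * a ^ k)) ≤ ν (Q k I) := by
  have hsub := ball_inter_subset_of_separated Q (r := fun n => c * a ^ n)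
    (fun m n hmn => mul_le_mul_of_nonneg_left (pow_le_pow_of_le_one ha₀ ha₁ hmn) hc) hnest
    (fun n J z w hz hw hwJ =>
      (mul_le_mul_of_nonneg_left (hdiam _ J) hc).trans (hsep n J z w hz hw hwJ)) k I z hz
  refine measure_mono_ae ?_
  filter_upwards [measure_eq_zero_iff_ae_notMem.1 hν] with w hw hwz
  exact hsub ⟨hwz, hXQ₀ (not_not.1 hw)⟩

theorem log_one_div_le_of_mul_pow_le {ρ a d : ℝ} (hρ : 0 < ρ) (ha : 0 < a) {m : ℕ}
    (h : ρ * a ^ m ≤ d) : Real.log (1 / d) ≤ -Real.log ρ + m * -Real.log a := by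
  have hd : 0 < ρ * a ^ m := by positivity
  rw [one_div, Real.log_inv]
  have hlog := Real.log_le_log hd h
  rw [Real.log_mul hρ.ne' (by positivity), Real.log_pow] at hlog
  linarith

theorem ofReal_log_one_div_dist_le {ρ a : ℝ} (hρ : 0 < ρ) (ha₀ : 0 < a) (ha₁ : a < 1) (z w : α) :
    ENNReal.ofReal (Real.log (1 / dist z w)) ≤ ENNReal.ofReal (-Real.log ρ) +
      ENNReal.ofReal (-Real.log a) * ∑' k, (ball z (ρ * a ^ k)).indicator 1 w := by
  rcases (dist_nonneg (x := z) (y := w)).eq_or_lt with hd | hd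
  · simp [← hd]
  have hex : ∃ m : ℕ, ρ * a ^ m ≤ dist z w := by
    obtain ⟨m, hm⟩ := exists_pow_lt_of_lt_one (div_pos hd hρ) ha₁
    exact ⟨m, by rw [lt_div_iff₀ hρ] at hm; linarith⟩
  have hL : 0 ≤ -Real.log a := neg_nonneg.2 (Real.log_nonpos ha₀.le ha₁.le)
  have hcount : ∀ k < Nat.find hex, w ∈ ball z (ρ * a ^ k) := fun k hk => by
    rw [mem_ball, dist_comm]; exact lt_of_not_ge (Nat.find_min hex hk)
  calc ENNReal.ofReal (Real.log (1 / dist z w))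
      ≤ ENNReal.ofReal (-Real.log ρ + Nat.find hex * -Real.log a) :=
        ENNReal.ofReal_le_ofReal (log_one_div_le_of_mul_pow_le hρ ha₀ (Nat.find_spec hex))
    _ ≤ ENNReal.ofReal (-Real.log ρ) + ENNReal.ofReal (-Real.log a) * Nat.find hex := by
        rw [← ENNReal.ofReal_natCast, ← ENNReal.ofReal_mul hL, mul_comm (-Real.log a)]
        exact ENNReal.ofReal_add_le
    _ ≤ _ := by gcongr; exact natCast_le_tsum_indicator_one hcount

theorem lintegral_ofReal_log_one_div_dist_le [MeasurableSpace α] [OpensMeasurableSpace α]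
    (ν : Measure α) (z : α) {ρ a β : ℝ} (hρ : 0 < ρ) (ha₀ : 0 < a) (ha₁ : a < 1)
    (hβ₀ : 0 ≤ β) (hβ₁ : β < 1) (hball : ∀ k : ℕ, ν (ball z (ρ * a ^ k)) ≤ ENNReal.ofReal (β ^ k)) :
    ∫⁻ w, ENNReal.ofReal (Real.log (1 / dist z w)) ∂ν ≤
      ENNReal.ofReal (-Real.log ρ) * ν univ + ENNReal.ofReal (-Real.log a / (1 - β)) := by
  have hL : 0 ≤ -Real.log a := neg_nonneg.2 (Real.log_nonpos ha₀.le ha₁.le)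
  have hmeas : ∀ k : ℕ, Measurable ((ball z (ρ * a ^ k)).indicator (1 : α → ℝ≥0∞)) :=
    fun k => measurable_one.indicator measurableSet_ball
  calc ∫⁻ w, ENNReal.ofReal (Real.log (1 / dist z w)) ∂ν
      ≤ ∫⁻ w, ENNReal.ofReal (-Real.log ρ) +
          ENNReal.ofReal (-Real.log a) * ∑' k, (ball z (ρ * a ^ k)).indicator 1 w ∂ν :=
        lintegral_mono fun w => ofReal_log_one_div_dist_le hρ ha₀ ha₁ z w
    _ = ENNReal.ofReal (-Real.log ρ) * ν univ +
          ENNReal.ofReal (-Real.log a) * ∑' k : ℕ, ν (ball z (ρ * a ^ k)) := by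
        rw [lintegral_add_left measurable_const, lintegral_const,
          lintegral_const_mul _ (Measurable.tsum hmeas),
          lintegral_tsum fun k => (hmeas k).aemeasurable]
        simp only [lintegral_indicator_one measurableSet_ball]
    _ ≤ ENNReal.ofReal (-Real.log ρ) * ν univ +
          ENNReal.ofReal (-Real.log a) * ∑' k : ℕ, ENNReal.ofReal (β ^ k) := by
        gcongr with k; exact hball k
    _ = ENNReal.ofReal (-Real.log ρ) * ν univ + ENNReal.ofReal (-Real.log a / (1 - β)) := by
        rw [← ENNReal.ofReal_tsum_of_nonneg (fun k => pow_nonneg hβ₀ k)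
          (summable_geometric_of_lt_one hβ₀ hβ₁), tsum_geometric_of_lt_one hβ₀ hβ₁,
          ← ENNReal.ofReal_mul hL, div_eq_mul_inv]

end CantorPotential

section LogCapacity

open Metric Set

variable {X : Set ℂ} {μ : Measure ℂ}

theorem ae_log_one_div_norm_sub_nonneg (hX : ∀ z ∈ X, ∀ w ∈ X, dist z w ≤ 1) (hμ : μ Xᶜ = 0)
    {z : ℂ} (hz : z ∈ X) : 0 ≤ᵐ[μ] fun w => Real.log (1 / ‖z - w‖) := by
  filter_upwards [measure_eq_zero_iff_ae_notMem.1 hμ] with w hw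
  rw [one_div, Real.log_inv, Pi.zero_apply, neg_nonneg, ← dist_eq_norm]
  exact Real.log_nonpos dist_nonneg (hX z hz w (not_not.1 hw))

theorem logPotential_nonneg (hX : ∀ z ∈ X, ∀ w ∈ X, dist z w ≤ 1) (hμ : μ Xᶜ = 0) {z : ℂ}
    (hz : z ∈ X) : 0 ≤ logPotential μ z :=
  integral_nonneg_of_ae (ae_log_one_div_norm_sub_nonneg hX hμ hz)

theorem logPotential_le [IsProbabilityMeasure μ] (hX : ∀ z ∈ X, ∀ w ∈ X, dist z w ≤ 1)
    (hμ : μ Xᶜ = 0) {z : ℂ} (hz : z ∈ X) {ρ a β : ℝ} (hρ : 0 < ρ) (ha₀ : 0 < a) (ha₁ : a < 1)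
    (hβ₀ : 0 ≤ β) (hβ₁ : β < 1) (hball : ∀ k : ℕ, μ (ball z (ρ * a ^ k)) ≤ ENNReal.ofReal (β ^ k)) :
    logPotential μ z ≤ |Real.log ρ| + -Real.log a / (1 - β) := by
  have hS : 0 ≤ -Real.log a / (1 - β) :=
    div_nonneg (neg_nonneg.2 (Real.log_nonpos ha₀.le ha₁.le)) (sub_nonneg.2 hβ₁.le)
  rw [logPotential, integral_eq_lintegral_of_nonneg_ae (ae_log_one_div_norm_sub_nonneg hX hμ hz)
    (by fun_prop : Measurable fun w => Real.log (1 / ‖z - w‖)).aestronglyMeasurable]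
  refine ENNReal.toReal_le_of_le_ofReal (by positivity) ?_
  calc ∫⁻ w, ENNReal.ofReal (Real.log (1 / ‖z - w‖)) ∂μ
      = ∫⁻ w, ENNReal.ofReal (Real.log (1 / dist z w)) ∂μ := by simp only [dist_eq_norm]
    _ ≤ ENNReal.ofReal (-Real.log ρ) * μ univ + ENNReal.ofReal (-Real.log a / (1 - β)) :=
        lintegral_ofReal_log_one_div_dist_le μ z hρ ha₀ ha₁ hβ₀ hβ₁ hball
    _ ≤ ENNReal.ofReal |Real.log ρ| + ENNReal.ofReal (-Real.log a / (1 - β)) := by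
        rw [measure_univ, mul_one]; gcongr; exact neg_le_abs _
    _ = ENNReal.ofReal (|Real.log ρ| + -Real.log a / (1 - β)) :=
        (ENNReal.ofReal_add (abs_nonneg _) hS).symm

theorem logEnergy_nonneg (hX : ∀ z ∈ X, ∀ w ∈ X, dist z w ≤ 1) (hμ : μ Xᶜ = 0) :
    0 ≤ logEnergy μ := by
  refine integral_nonneg_of_ae ?_
  filter_upwards [measure_eq_zero_iff_ae_notMem.1 hμ] with z hz
  exact logPotential_nonneg hX hμ (not_not.1 hz)

theorem logEnergy_le [IsProbabilityMeasure μ] (hX : ∀ z ∈ X, ∀ w ∈ X, dist z w ≤ 1)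
    (hμ : μ Xᶜ = 0) {I : ℝ} (hI : ∀ z ∈ X, logPotential μ z ≤ I) : logEnergy μ ≤ I := by
  have hμX : ∀ᵐ z ∂μ, z ∈ X := by
    filter_upwards [measure_eq_zero_iff_ae_notMem.1 hμ] with z hz using not_not.1 hz
  calc logEnergy μ ≤ ∫ _, I ∂μ := by
        refine integral_mono_of_nonneg ?_ (integrable_const I) ?_
        · filter_upwards [hμX] with z hz using logPotential_nonneg hX hμ hz
        · filter_upwards [hμX] with z hz using hI z hz
    _ = I := by simp

theorem exp_neg_logEnergy_le_logCapacity [IsProbabilityMeasure μ]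
    (hX : ∀ z ∈ X, ∀ w ∈ X, dist z w ≤ 1) (hμ : μ Xᶜ = 0) :
    Real.exp (-logEnergy μ) ≤ logCapacity X := by
  refine le_csSup ⟨1, ?_⟩ ⟨μ, inferInstance, hμ, rfl⟩
  rintro _ ⟨μ', _, hμ', rfl⟩
  exact Real.exp_le_one_iff.2 (neg_nonpos.2 (logEnergy_nonneg hX hμ'))

end LogCapacity

theorem rpow_div_pow_le_rpow_pow {d b P h : ℝ} {k : ℕ} (hd : 0 ≤ d) (hb : 0 ≤ b)
    (hdb : d ≤ b ^ k) (hh : 0 ≤ h) (hP : 1 ≤ P) : d ^ h / P ^ k ≤ (b ^ h) ^ k :=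
  calc d ^ h / P ^ k ≤ d ^ h := div_le_self (Real.rpow_nonneg hd h) (one_le_pow₀ hP)
    _ ≤ (b ^ k) ^ h := Real.rpow_le_rpow hd hdb hh
    _ = (b ^ h) ^ k := (Real.rpow_pow_comm hb h k).symm

theorem capacity_uniformly_bounded_below_general
    (N : ℕ) (al au csep : ℝ)
    (hal : 0 < al) (halau : al ≤ au) (hau : au < 1) (hcsep : 0 < csep)
    (h : ℝ) (hh : 0 < h) (hP : 1 < (N : ℝ) * al ^ h) :
    ∃ κ I₀ : ℝ, 0 < κ ∧
      ∀ (X : Set ℂ) (Q' : ∀ n : ℕ, (Fin n → Fin N) → Set ℂ) (ν : Measure ℂ),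
        IsCompact X → X.Nonempty →
        (∀ n (I : Fin n → Fin N),
          al ^ n ≤ Metric.diam (Q' n I) ∧ Metric.diam (Q' n I) ≤ au ^ n) →
        (∀ n (I : Fin (n + 1) → Fin N), Q' (n + 1) I ⊆ Q' n (Fin.init I)) →
        (∀ n (I : Fin (n + 1) → Fin N) (z w : ℂ), z ∈ Q' (n + 1) I →
          w ∈ Q' n (Fin.init I) → w ∉ Q' (n + 1) I →
          csep * Metric.diam (Q' (n + 1) I) ≤ dist z w) →
        (∀ n, X ⊆ ⋃ I : Fin n → Fin N, Q' n I) →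
        IsProbabilityMeasure ν → ν Xᶜ = 0 →
        (∀ n (I : Fin n → Fin N), ν (Q' n I) ≤
          ENNReal.ofReal (Metric.diam (Q' n I) ^ h / ((N : ℝ) * al ^ h) ^ n)) →
        (∀ z ∈ X, logPotential ν z ≤ I₀) ∧
          Real.exp (-I₀) ≤ logCapacity X ∧ κ ≤ logCapacity X := by
  have hau₀ : 0 < au := hal.trans_le halau
  have hal₁ : al < 1 := halau.trans_lt hau
  set I₀ := |Real.log csep| + -Real.log al / (1 - au ^ h)
  refine ⟨Real.exp (-I₀), I₀, Real.exp_pos _, ?_⟩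
  intro X Q' ν _ _ hdiam hnest hsep hcover _ hν hνQ
  have hXQ₀ : X ⊆ Q' 0 ![] := fun z hz => by
    simpa [Subsingleton.elim _ (![] : Fin 0 → Fin N)] using hcover 0 hz
  have hX : ∀ z ∈ X, ∀ w ∈ X, dist z w ≤ 1 := by
    have hQ₀ : 0 < Metric.diam (Q' 0 ![]) := one_pos.trans_le (by simpa using (hdiam 0 ![]).1)
    exact fun z hz w hw => (Metric.dist_le_diam_of_mem (isBounded_of_diam_pos hQ₀) (hXQ₀ hz)
      (hXQ₀ hw)).trans (by simpa using (hdiam 0 ![]).2)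
  have hball : ∀ z ∈ X, ∀ k : ℕ,
      ν (Metric.ball z (csep * al ^ k)) ≤ ENNReal.ofReal ((au ^ h) ^ k) := by
    intro z hz k
    obtain ⟨I, hzI⟩ := Set.mem_iUnion.1 (hcover k hz)
    calc ν (Metric.ball z (csep * al ^ k)) ≤ ν (Q' k I) :=
          measure_ball_le_of_mem_cylinder Q' hcsep.le hal.le hal₁.le (fun n I => (hdiam n I).1)
            hnest hsep hXQ₀ hν hzI
      _ ≤ _ := hνQ k I
      _ ≤ ENNReal.ofReal ((au ^ h) ^ k) := ENNReal.ofReal_le_ofReal <|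
          rpow_div_pow_le_rpow_pow Metric.diam_nonneg hau₀.le (hdiam k I).2 hh.le hP.le
  have hpot : ∀ z ∈ X, logPotential ν z ≤ I₀ := fun z hz =>
    logPotential_le hX hν hz hcsep hal hal₁ (by positivity) (Real.rpow_lt_one hau₀.le hau hh)
      (hball z hz)
  have hcap : Real.exp (-I₀) ≤ logCapacity X :=
    (Real.exp_le_exp.2 (neg_le_neg (logEnergy_le hX hν hpot))).trans
      (exp_neg_logEnergy_le_logCapacity hX hν)
  exact ⟨hpot, hcap, hcap⟩

theorem capacity_uniformly_bounded_below
    (N : ℕ) (hN : 2 ≤ N) (al au csep : ℝ)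
    (hal : 0 < al) (halau : al ≤ au) (hau : au < 1) (hcsep : 0 < csep)
    (h : ℝ) (hh : 0 < h) (hP : 1 < (N : ℝ) * al ^ h) :
    ∃ κ I₀ : ℝ, 0 < κ ∧
      ∀ (X : Set ℂ) (Q' : ∀ n : ℕ, (Fin n → Fin N) → Set ℂ) (ν : Measure ℂ),
        IsCompact X → X.Nonempty →
        (∀ n (I : Fin n → Fin N),
          al ^ n ≤ Metric.diam (Q' n I) ∧ Metric.diam (Q' n I) ≤ au ^ n) →
        (∀ n (I : Fin (n + 1) → Fin N), Q' (n + 1) I ⊆ Q' n (Fin.init I)) →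
        (∀ n (I : Fin (n + 1) → Fin N) (z w : ℂ), z ∈ Q' (n + 1) I →
          w ∈ Q' n (Fin.init I) → w ∉ Q' (n + 1) I →
          csep * Metric.diam (Q' (n + 1) I) ≤ dist z w) →
        (∀ n, X ⊆ ⋃ I : Fin n → Fin N, Q' n I) →
        IsProbabilityMeasure ν → ν Xᶜ = 0 →
        (∀ n (I : Fin n → Fin N), ν (Q' n I) ≤
          ENNReal.ofReal (Metric.diam (Q' n I) ^ h / ((N : ℝ) * al ^ h) ^ n)) →
        (∀ z ∈ X, logPotential ν z ≤ I₀) ∧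
          Real.exp (-I₀) ≤ logCapacity X ∧ κ ≤ logCapacity X :=
  capacity_uniformly_bounded_below_general N al au csep hal halau hau hcsep h hh hP
end

section
/- Suppose L ⊂ ℂ is a continuously differentiable (C¹) simple arc, and suppose there exist contracting similitudes g_n(z) = γ_n z + b_n with ratios |γ_n| → 0 such that g_n(L) ⊆ L for all n, and L contains three non-collinear points. Then a contradiction follows; hence if a C¹ arc is invariant under arbitrarily strong contracting similitudes mapping it into itself, it must be contained in a straight line. -/
/-!
Write `g_n(p), g_n(q), g_n(r)` as `φ(t_n), φ(s_n), φ(u_n)` for non-collinear `p, q, r ∈ L`.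
Along an ultrafilter the parameters converge, and since `g_n(q) - g_n(p) = γ_n (q - p) → 0` and
`φ` is injective on the compact interval, all three tend to the same `t₀`. By the mean value
theorem the chord slopes of `φ` between them tend to `φ'(t₀) ≠ 0`, so their quotient tends to
`1`. But that quotient is a real multiple of the fixed number `(q - p) / (r - p)`, which is not
real because `p, q, r` are not collinear.
-/

open Filter Topology Set

section Slope

variable {E : Type*} [NormedAddCommGroup E] [NormedSpace ℝ E] {f f' : ℝ → E} {s : Set ℝ}

theorem Convex.norm_slope_sub_le (hs : Convex ℝ s) (hf : ∀ x ∈ s, HasDerivWithinAt f (f' x) s x)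
    {D : E} {C : ℝ} (hC : ∀ x ∈ s, ‖f' x - D‖ ≤ C) {x y : ℝ} (hx : x ∈ s) (hy : y ∈ s)
    (hxy : x ≠ y) : ‖slope f x y - D‖ ≤ C := by
  have hmvt := hs.norm_image_sub_le_of_norm_hasDerivWithin_le (f := fun z => f z - z • D)
    (fun z hz => (hf z hz).sub ((hasDerivWithinAt_id z s).smul_const D)) (by simpa using hC) hx hy
  have hsub : (f y - y • D) - (f x - x • D) = (y - x) • (slope f x y - D) := by
    rw [smul_sub, sub_smul_slope, vsub_eq_sub, sub_smul]; abel
  rw [hsub, norm_smul, mul_comm] at hmvt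
  exact le_of_mul_le_mul_right hmvt (norm_pos_iff.2 (sub_ne_zero.2 hxy.symm))

theorem Convex.tendsto_slope_of_continuousWithinAt (hs : Convex ℝ s)
    (hf : ∀ x ∈ s, HasDerivWithinAt f (f' x) s x) {a : ℝ} (hf' : ContinuousWithinAt f' s a)
    {ι : Type*} {l : Filter ι} {x y : ι → ℝ}
    (hx : Tendsto x l (𝓝[s] a)) (hy : Tendsto y l (𝓝[s] a)) (hxy : ∀ᶠ i in l, x i ≠ y i) :
    Tendsto (fun i => slope f (x i) (y i)) l (𝓝 (f' a)) := by
  rw [Metric.tendsto_nhds]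
  intro ε hε
  obtain ⟨δ, hδ, hball⟩ := Metric.continuousWithinAt_iff.mp hf' (ε / 2) (half_pos hε)
  have hnear : s ∩ Metric.ball a δ ∈ 𝓝[s] a := inter_mem_nhdsWithin s (Metric.ball_mem_nhds a hδ)
  have hC : ∀ z ∈ s ∩ Metric.ball a δ, ‖f' z - f' a‖ ≤ ε / 2 := fun z hz => by
    simpa [dist_eq_norm] using (hball hz.1 hz.2).le
  filter_upwards [hx hnear, hy hnear, hxy] with i hxi hyi hne
  rw [dist_eq_norm]
  exact ((hs.inter (convex_ball a δ)).norm_slope_sub_le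
    (fun z hz => (hf z hz.1).mono inter_subset_left) hC hxi hyi hne).trans_lt (half_lt_self hε)

end Slope

theorem slope_div_slope (f : ℝ → ℂ) (a b c : ℝ) :
    slope f a b / slope f a c = ((c - a) / (b - a) : ℝ) * ((f b - f a) / (f c - f a)) := by
  simp only [slope_def_module, Complex.real_smul]
  rw [mul_div_mul_comm, ← Complex.ofReal_div, inv_div_inv]

theorem im_eq_zero_of_tendsto_ofReal_mul {ι : Type*} {l : Filter ι} [l.NeBot] {c : ι → ℝ}
    {ζ : ℂ} (h : Tendsto (fun i => (c i : ℂ) * ζ) l (𝓝 1)) : ζ.im = 0 := by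
  by_contra hζ
  have him : Tendsto (fun i => c i * ζ.im) l (𝓝 0) := by
    simpa [Function.comp_def] using (Complex.continuous_im.tendsto 1).comp h
  have hc : Tendsto c l (𝓝 0) := by
    simpa [hζ] using him.div_const ζ.im
  have h0 : Tendsto (fun i => (c i : ℂ) * ζ) l (𝓝 0) := by
    simpa using ((Complex.continuous_ofReal.tendsto 0).comp hc).mul_const ζ
  exact one_ne_zero (tendsto_nhds_unique h h0)

theorem Complex.collinear_of_im_div_eq_zero {p q r : ℂ} (h : ((q - p) / (r - p)).im = 0) :
    Collinear ℝ {p, q, r} := by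
  rcases eq_or_ne r p with rfl | hrp
  · simpa [Set.pair_comm] using collinear_pair ℝ r q
  rw [Set.insert_comm]
  apply collinear_insert_of_mem_affineSpan_pair
  convert AffineMap.lineMap_mem_affineSpan_pair ((q - p) / (r - p)).re p r
  have hζ : ((((q - p) / (r - p)).re : ℝ) : ℂ) = (q - p) / (r - p) := Complex.ext rfl h.symm
  rw [AffineMap.lineMap_apply, vsub_eq_sub, vadd_eq_add, Complex.real_smul, hζ,
    div_mul_cancel₀ _ (sub_ne_zero.2 hrp), sub_add_cancel]

section Ultrafilter

variable {ι X : Type*} [TopologicalSpace X] (U : Ultrafilter ι) {K : Set X}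

theorem IsCompact.exists_tendsto_nhdsWithin_ultrafilter (hK : IsCompact K) {x : ι → X}
    (hx : ∀ i, x i ∈ K) : ∃ a ∈ K, Tendsto x U (𝓝[K] a) := by
  obtain ⟨a, ha, hxa⟩ := hK.ultrafilter_le_nhds' (U.map x) (Ultrafilter.mem_map.2 (univ_mem' hx))
  exact ⟨a, ha, tendsto_nhdsWithin_iff.2 ⟨hxa, Eventually.of_forall hx⟩⟩

theorem IsCompact.tendsto_of_tendsto_image_sub {E : Type*} [NormedAddCommGroup E] {f : X → E}
    (hK : IsCompact K) (hf : ContinuousOn f K) (hinj : InjOn f K) {x y : ι → X} {a : X}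
    (ha : a ∈ K) (hx : Tendsto x U (𝓝[K] a)) (hyK : ∀ i, y i ∈ K)
    (hxy : Tendsto (fun i => f (y i) - f (x i)) U (𝓝 0)) : Tendsto y U (𝓝[K] a) := by
  obtain ⟨b, hb, hy⟩ := hK.exists_tendsto_nhdsWithin_ultrafilter U hyK
  have hfab : f b - f a = 0 :=
    tendsto_nhds_unique (((hf b hb).tendsto.comp hy).sub ((hf a ha).tendsto.comp hx)) hxy
  rwa [hinj hb ha (sub_eq_zero.1 hfab)] at hy

end Ultrafilter

theorem IsCompact.tendsto_slope_of_tendsto_image_sub {ι E : Type*} [NormedAddCommGroup E]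
    [NormedSpace ℝ E] {f f' : ℝ → E} {K : Set ℝ} (hKc : IsCompact K) (hKv : Convex ℝ K)
    (hf : ∀ x ∈ K, HasDerivWithinAt f (f' x) K x) (hf' : ContinuousOn f' K) (hinj : InjOn f K)
    (U : Ultrafilter ι) {x y : ι → ℝ} {a : ℝ} (ha : a ∈ K) (hx : Tendsto x U (𝓝[K] a))
    (hyK : ∀ i, y i ∈ K) (hxy : Tendsto (fun i => f (y i) - f (x i)) U (𝓝 0))
    (hne : ∀ i, f (y i) ≠ f (x i)) : Tendsto (fun i => slope f (x i) (y i)) U (𝓝 (f' a)) :=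
  hKv.tendsto_slope_of_continuousWithinAt hf (hf' a ha) hx
    (hKc.tendsto_of_tendsto_image_sub U (fun z hz => (hf z hz).continuousWithinAt) hinj ha hx
      hyK hxy)
    (Eventually.of_forall fun i hi => hne i (congrArg f hi.symm))

theorem arc_invariant_under_strong_contractions_is_line
    (φ : ℝ → ℂ) (φ' : ℝ → ℂ)
    (hderiv : ∀ t ∈ Set.Icc (0 : ℝ) 1, HasDerivAt φ (φ' t) t)
    (hφ'cont : ContinuousOn φ' (Set.Icc (0 : ℝ) 1))
    (hreg : ∀ t ∈ Set.Icc (0 : ℝ) 1, φ' t ≠ 0)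
    (hinj : Set.InjOn φ (Set.Icc (0 : ℝ) 1))
    (L : Set ℂ) (hL : L = φ '' Set.Icc (0 : ℝ) 1)
    (γ b : ℕ → ℂ) (hγ0 : ∀ n, γ n ≠ 0)
    (hγlim : Tendsto (fun n => ‖γ n‖) atTop (nhds 0))
    (hinv : ∀ n, (fun z => γ n * z + b n) '' L ⊆ L)
    (hnoncol : ∃ p ∈ L, ∃ q ∈ L, ∃ r ∈ L, ¬ Collinear ℝ {p, q, r}) :
    False := by
  obtain ⟨p, hp, q, hq, r, hr, hncol⟩ := hnoncol
  have hpre : ∀ z ∈ L, ∀ n, ∃ t ∈ Icc (0 : ℝ) 1, φ t = γ n * z + b n := fun z hz n => by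
    subst hL
    exact hinv n (mem_image_of_mem _ hz)
  choose t ht hφt using hpre p hp
  choose s hs hφs using hpre q hq
  choose u hu hφu using hpre r hr
  let U : Ultrafilter ℕ := .of atTop
  have hγU : Tendsto γ U (𝓝 0) :=
    (tendsto_zero_iff_norm_tendsto_zero.2 hγlim).mono_left (Ultrafilter.of_le atTop)
  obtain ⟨t₀, ht₀, htU⟩ := isCompact_Icc.exists_tendsto_nhdsWithin_ultrafilter U ht
  have hchord : ∀ z ≠ p, ∀ v : ℕ → ℝ, (∀ n, v n ∈ Icc (0 : ℝ) 1) →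
      (∀ n, φ (v n) = γ n * z + b n) → Tendsto (fun n => slope φ (t n) (v n)) U (𝓝 (φ' t₀)) := by
    intro z hz v hv hφv
    have hsub : ∀ n, φ (v n) - φ (t n) = γ n * (z - p) := fun n => by rw [hφv, hφt]; ring
    refine isCompact_Icc.tendsto_slope_of_tendsto_image_sub (convex_Icc 0 1)
      (fun x hx => (hderiv x hx).hasDerivWithinAt) hφ'cont hinj U ht₀ htU hv ?_ fun n => ?_
    · simpa only [hsub, zero_mul] using hγU.mul_const (z - p)
    · rw [← sub_ne_zero, hsub]
      exact mul_ne_zero (hγ0 n) (sub_ne_zero.2 hz)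
  have hratio : Tendsto (fun n => (((u n - t n) / (s n - t n) : ℝ) : ℂ) * ((q - p) / (r - p)))
      U (𝓝 1) := by
    have h := (hchord q (ne₁₂_of_not_collinear hncol).symm s hs hφs).div
      (hchord r (ne₁₃_of_not_collinear hncol).symm u hu hφu) (hreg t₀ ht₀)
    rw [div_self (hreg t₀ ht₀)] at h
    refine h.congr fun n => ?_
    rw [Pi.div_apply, slope_div_slope, hφs, hφt, hφu, add_sub_add_right_eq_sub,
      add_sub_add_right_eq_sub, ← mul_sub, ← mul_sub, mul_div_mul_left _ _ (hγ0 n)]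
  exact hncol (Complex.collinear_of_im_div_eq_zero (im_eq_zero_of_tendsto_ofReal_mul hratio))
end
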